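/- For all t < 5/4, there exists a t-tough 2K₂-free graph with at least three vertices that has no spanning 2-trail. -/

import Mathlib

/-!
The witness is `G_n`. In a spanning 2-trail, viewed as a connected spanning even subgraph of
maximum degree 4, every vertex of `Q₂` has degree at least 2 and hence a neighbour in `Q₃`
besides its partner in `Q₁`; but the `n - 1` vertices of `Q₃` can absorb at most `4(n - 1)` of
these `4n` edges.

For toughness, a cutset `S` must contain `Q₃`, which dominates the graph. If `S` contains `k`
vertices of `Q₁`, then `G_n - S` has at most `k + 1` components (the `Q₂`-vertices whose partners
were removed, plus one component for everything else) while `|S| ≥ n - 1 + k`. Finally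
`t (k + 1) ≤ n - 1 + k` for all `0 ≤ k ≤ 4n` as soon as `t (4n + 1) ≤ 5n - 1`, which holds for
large `n` because `t < 5/4`.
-/

open SimpleGraph

def TwoK2Free {V : Type*} (G : SimpleGraph V) : Prop :=
  ¬ ∃ a b c d : V, G.Adj a b ∧ G.Adj c d ∧
      a ≠ c ∧ a ≠ d ∧ b ≠ c ∧ b ≠ d ∧
      ¬ G.Adj a c ∧ ¬ G.Adj a d ∧ ¬ G.Adj b c ∧ ¬ G.Adj b d

def Tough {V : Type*} [Fintype V] (t : ℚ) (G : SimpleGraph V) : Prop :=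
  ∀ S : Finset V,
    2 ≤ Nat.card (G.induce ((↑S : Set V)ᶜ)).ConnectedComponent →
    t * Nat.card (G.induce ((↑S : Set V)ᶜ)).ConnectedComponent ≤ S.card

def HasSpanning2Trail {V : Type*} (G : SimpleGraph V) : Prop :=
  ∃ H : G.Subgraph, H.verts = Set.univ ∧ H.coe.Connected ∧
    (∀ v, Even (H.neighborSet v).ncard) ∧ (∀ v, (H.neighborSet v).ncard ≤ 4)

namespace SimpleGraph

variable {V : Type*} {G : SimpleGraph V}

lemma Subgraph.two_le_ncard_neighborSet [Finite V] [Nontrivial V] {H : G.Subgraph}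
    (hverts : H.verts = Set.univ) (hconn : H.coe.Preconnected) {v : V}
    (heven : Even (H.neighborSet v).ncard) : 2 ≤ (H.neighborSet v).ncard := by
  have : Nontrivial H.verts := hverts ▸ Set.nontrivial_univ.coe_sort
  obtain ⟨w, hw⟩ := Subgraph.Preconnected.exists_adj_of_nontrivial ⟨hconn⟩ ⟨v, hverts ▸ trivial⟩
  have hpos : 0 < (H.neighborSet v).ncard := (Set.ncard_pos).2 ⟨w, hw⟩
  obtain ⟨m, hm⟩ := heven
  omega

lemma preconnected_of_forall_adj {u : V} (h : ∀ v, v ≠ u → G.Adj v u) : G.Preconnected := by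
  have hu : ∀ v, G.Reachable v u := fun v ↦ by
    obtain rfl | hv := eq_or_ne v u
    exacts [.refl v, (h v hv).reachable]
  exact fun v w ↦ (hu v).trans (hu w).symm

lemma card_connectedComponent_le_ncard_add_one [Finite V] (X : Set V)
    (h : ∀ v w, v ∉ X → w ∉ X → G.Reachable v w) :
    Nat.card G.ConnectedComponent ≤ X.ncard + 1 := by
  have hout : (G.connectedComponentMk '' Xᶜ).ncard ≤ 1 := by
    refine (Set.ncard_le_one (Set.toFinite _)).2 ?_
    rintro _ ⟨v, hv, rfl⟩ _ ⟨w, hw, rfl⟩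
    exact ConnectedComponent.sound (h v w hv hw)
  calc Nat.card G.ConnectedComponent
      = (G.connectedComponentMk '' (X ∪ Xᶜ)).ncard := by
        rw [Set.union_compl_self, Set.image_univ,
          Set.range_eq_univ.2 fun C ↦ C.exists_rep, Set.ncard_univ]
    _ ≤ (G.connectedComponentMk '' X).ncard + (G.connectedComponentMk '' Xᶜ).ncard := by
        rw [Set.image_union]; exact Set.ncard_union_le _ _
    _ ≤ X.ncard + 1 := add_le_add (Set.ncard_image_le (Set.toFinite X)) hout

end SimpleGraph

abbrev WitnessVertex (n : ℕ) : Type := (Fin (4 * n) ⊕ Fin (4 * n)) ⊕ Fin (n - 1)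

namespace WitnessVertex

variable {n : ℕ}

def q1 (i : Fin (4 * n)) : WitnessVertex n := .inl (.inl i)
def q2 (i : Fin (4 * n)) : WitnessVertex n := .inl (.inr i)
def q3 (j : Fin (n - 1)) : WitnessVertex n := .inr j

lemma q2_injective : Function.Injective (q2 (n := n)) :=
  Sum.inl_injective.comp Sum.inr_injective

def Adj : WitnessVertex n → WitnessVertex n → Prop
  | .inl (.inl i), .inl (.inl j) => i ≠ j
  | .inl (.inl i), .inl (.inr j) => i = j
  | .inl (.inr i), .inl (.inl j) => i = j
  | .inl (.inr _), .inl (.inr _) => False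
  | .inr i, .inr j => i ≠ j
  | .inr _, .inl _ => True
  | .inl _, .inr _ => True

end WitnessVertex

open WitnessVertex

def witnessGraph (n : ℕ) : SimpleGraph (WitnessVertex n) where
  Adj := WitnessVertex.Adj
  symm := by constructor; rintro (⟨i|i⟩|i) (⟨j|j⟩|j) h <;> simp_all [WitnessVertex.Adj] <;> omega
  loopless := by constructor; rintro (⟨i|i⟩|i) h <;> simp_all [WitnessVertex.Adj]

lemma card_witnessVertex (n : ℕ) : Fintype.card (WitnessVertex n) = 4 * n + 4 * n + (n - 1) := by
  simp only [Fintype.card_sum, Fintype.card_fin]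

lemma witnessGraph_twoK2Free (n : ℕ) : TwoK2Free (witnessGraph n) := by
  rintro ⟨(⟨a|a⟩|a), (⟨b|b⟩|b), (⟨c|c⟩|c), (⟨d|d⟩|d),
    hab, hcd, hac, had, hbc, hbd, nac, nad, nbc, nbd⟩ <;>
    simp_all [witnessGraph, WitnessVertex.Adj]

lemma witnessGraph_not_hasSpanning2Trail {n : ℕ} (hn : 1 ≤ n) :
    ¬ HasSpanning2Trail (witnessGraph n) := by
  rintro ⟨H, hverts, hconn, heven, hdeg⟩
  let i₀ : Fin (4 * n) := ⟨0, by omega⟩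
  have : Nontrivial (WitnessVertex n) := nontrivial_of_ne (q1 i₀) (q2 i₀) (by simp [q1, q2])
  -- Besides its partner `q1 i`, every neighbour of `q2 i` lies in `Q₃`.
  have hQ₃ : ∀ i, ∃ j, H.Adj (q2 i) (q3 j) := by
    intro i
    obtain ⟨w, hw, hwi⟩ := Set.exists_ne_of_one_lt_ncard
      (H.two_le_ncard_neighborSet hverts hconn.preconnected (heven (q2 i))) (q1 i)
    rcases w with (⟨a|a⟩|j)
    · obtain rfl : i = a := H.adj_sub hw
      exact absurd rfl hwi
    · exact (H.adj_sub hw).elim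
    · exact ⟨j, hw⟩
  choose f hf using hQ₃
  obtain ⟨j, hj⟩ := Fintype.exists_lt_card_fiber_of_mul_lt_card f (n := 4)
    (by simp only [Fintype.card_fin]; omega)
  have hfiber : (Finset.univ.filter fun i => f i = j).card ≤ (H.neighborSet (q3 j)).ncard := by
    rw [← Set.ncard_coe_finset]
    refine Set.ncard_le_ncard_of_injOn q2 ?_ q2_injective.injOn (Set.toFinite _)
    intro i hi
    simp only [Finset.coe_filter, Finset.mem_univ, true_and, Set.mem_ofPred_eq] at hi
    exact (hi ▸ hf i).symm
  have := hdeg (q3 j)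
  omega

lemma q3_mem_of_two_le_card_connectedComponent {n : ℕ} {S : Finset (WitnessVertex n)}
    (hc : 2 ≤ Nat.card ((witnessGraph n).induce (↑S : Set (WitnessVertex n))ᶜ).ConnectedComponent)
    (j : Fin (n - 1)) : q3 j ∈ S := by
  by_contra hj
  have hpre : ((witnessGraph n).induce (↑S : Set (WitnessVertex n))ᶜ).Preconnected := by
    refine preconnected_of_forall_adj (u := ⟨q3 j, hj⟩) ?_
    rintro ⟨(⟨i|i⟩|i), hv⟩ hne
    · trivial
    · trivial
    · exact fun hij ↦ hne (by subst hij; rfl)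
  have := hpre.subsingleton_connectedComponent
  have := Finite.card_le_one_iff_subsingleton.2 this
  omega

lemma card_connectedComponent_witnessGraph_le {n : ℕ} {S : Finset (WitnessVertex n)}
    (hQ₃ : ∀ j, q3 j ∈ S) :
    Nat.card ((witnessGraph n).induce (↑S : Set (WitnessVertex n))ᶜ).ConnectedComponent ≤
      S.toLeft.toLeft.card + 1 := by
  set G := (witnessGraph n).induce (↑S : Set (WitnessVertex n))ᶜ
  -- the isolated vertices `q2 i` whose partner `q1 i` was removed
  set X : Set ↥(↑S : Set (WitnessVertex n))ᶜ :=
    Subtype.val ⁻¹' (q2 '' (↑S.toLeft.toLeft : Set (Fin (4 * n))))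
  have hX : X.ncard ≤ S.toLeft.toLeft.card := calc
    X.ncard ≤ (q2 '' ↑S.toLeft.toLeft).ncard :=
      Set.ncard_le_ncard_of_injOn Subtype.val (fun _ ↦ id) Subtype.val_injective.injOn
        (Set.toFinite _)
    _ ≤ S.toLeft.toLeft.card := (Set.ncard_image_le (Set.toFinite _)).trans_eq
      (Set.ncard_coe_finset _)
  have hQ₁ : ∀ v : ↥(↑S : Set (WitnessVertex n))ᶜ, v ∉ X →
      ∃ (a : Fin (4 * n)) (ha : q1 a ∉ S), G.Reachable v ⟨q1 a, ha⟩ := by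
    rintro ⟨(⟨i|i⟩|j), hv⟩ hvX
    · exact ⟨i, hv, .rfl⟩
    · have hi : q1 i ∉ S := fun hi ↦ hvX ⟨i, by simpa [q1] using hi, rfl⟩
      exact ⟨i, hi, Adj.reachable (show i = i from rfl)⟩
    · exact absurd (hQ₃ j) hv
  refine (card_connectedComponent_le_ncard_add_one X fun v w hv hw ↦ ?_).trans (by omega)
  obtain ⟨a, ha, hva⟩ := hQ₁ v hv
  obtain ⟨b, hb, hwb⟩ := hQ₁ w hw
  refine hva.trans (Reachable.trans ?_ hwb.symm)
  obtain rfl | hab := eq_or_ne a b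
  · rfl
  · exact Adj.reachable (show a ≠ b from hab)

lemma sub_one_add_card_toLeft_toLeft_le_card {n : ℕ} {S : Finset (WitnessVertex n)}
    (hQ₃ : ∀ j, q3 j ∈ S) : n - 1 + S.toLeft.toLeft.card ≤ S.card := by
  have hright : S.toRight = Finset.univ :=
    Finset.eq_univ_of_forall fun j ↦ by simpa [q3] using hQ₃ j
  rw [← Finset.card_toLeft_add_card_toRight (u := S), ← Finset.card_toLeft_add_card_toRight
    (u := S.toLeft), hright, Finset.card_univ, Fintype.card_fin]
  omega

-- The difference of the two sides is affine in `y`, and nonnegative at `y = 0` and `y = 4x`.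
lemma mul_add_one_le_of_le_four_mul {t x y : ℚ} (hx : 0 < x) (hy : 0 ≤ y) (hyx : y ≤ 4 * x)
    (h₀ : t + 1 ≤ x) (h₁ : t * (4 * x + 1) ≤ 5 * x - 1) : t * (y + 1) ≤ x - 1 + y := by
  have key : 4 * x * (x - 1 + y - t * (y + 1)) =
      (4 * x - y) * (x - 1 - t) + y * (5 * x - 1 - t * (4 * x + 1)) := by ring
  have hprod : 0 ≤ 4 * x * (x - 1 + y - t * (y + 1)) := by
    rw [key]
    exact add_nonneg (mul_nonneg (by linarith) (by linarith)) (mul_nonneg hy (by linarith))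
  linarith [nonneg_of_mul_nonneg_right hprod (by positivity)]

lemma witnessGraph_tough {t : ℚ} {n : ℕ} (h₀ : t + 1 ≤ n) (h₁ : t * (4 * n + 1) ≤ 5 * n - 1) :
    Tough t (witnessGraph n) := by
  intro S hc
  have hQ₃ := q3_mem_of_two_le_card_connectedComponent hc
  have hcomp := card_connectedComponent_witnessGraph_le hQ₃
  have hS := sub_one_add_card_toLeft_toLeft_le_card hQ₃
  have hk : S.toLeft.toLeft.card ≤ 4 * n := (Finset.card_le_univ _).trans_eq (Fintype.card_fin _)
  rcases le_or_gt t 0 with ht | ht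
  · exact (mul_nonpos_of_nonpos_of_nonneg ht (Nat.cast_nonneg _)).trans (Nat.cast_nonneg _)
  have h1n : 1 ≤ n := by exact_mod_cast (by linarith : (1 : ℚ) ≤ n)
  calc t * _ ≤ t * (S.toLeft.toLeft.card + 1) := by gcongr; exact_mod_cast hcomp
    _ ≤ n - 1 + S.toLeft.toLeft.card :=
      mul_add_one_le_of_le_four_mul (by exact_mod_cast h1n) (Nat.cast_nonneg _)
        (by exact_mod_cast hk) h₀ h₁
    _ ≤ S.card := by rw [← Nat.cast_one, ← Nat.cast_sub h1n]; exact_mod_cast hS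

theorem stmt_14 (t : ℚ) (ht : t < 5 / 4) :
    ∃ (V : Type) (_ : Fintype V) (G : SimpleGraph V),
      Tough t G ∧ TwoK2Free G ∧ 3 ≤ Fintype.card V ∧
      ¬ HasSpanning2Trail G := by
  obtain ⟨m, hm⟩ := exists_nat_ge ((t + 1) / (5 - 4 * t))
  have h₀ : t + 1 ≤ ((m + 3 : ℕ) : ℚ) := by push_cast; linarith [(Nat.cast_nonneg m : (0 : ℚ) ≤ m)]
  have h₁ : t * (4 * ((m + 3 : ℕ) : ℚ) + 1) ≤ 5 * ((m + 3 : ℕ) : ℚ) - 1 := by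
    have := (div_le_iff₀ (by linarith : (0 : ℚ) < 5 - 4 * t)).1 hm
    push_cast; nlinarith
  refine ⟨WitnessVertex (m + 3), inferInstance, witnessGraph (m + 3), witnessGraph_tough h₀ h₁,
    witnessGraph_twoK2Free _, ?_, witnessGraph_not_hasSpanning2Trail (by omega)⟩
  rw [card_witnessVertex]
  omega
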